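/- arXiv:1602.00784 — 2 statements merged into one kernel-verified Lean document; each statement's English description precedes it below -/
import Mathlib

section
/- Let Γ be a finitely generated nilpotent group with polynomial growth of degree d(Γ) satisfying 1 ≤ d(Γ) ≤ 3 (equivalently, by the Bass–Guivarc'h formula, the lower central series ranks satisfy d(Γ) = Σ(ℓ+1)·r_ℓ ≤ 3). Then Γ contains a free abelian subgroup of finite index and rank d(Γ). -/
instance lcsQuotNormal {Γ : Type*} [Group Γ] (H K : Subgroup Γ) [hH : H.Normal] :
    (H.subgroupOf K).Normal := hH.subgroupOf K

/-!
If `d(Γ) ≤ 3` then `r₁ = 0`: either `r₀ ≥ 2` and the degree bound leaves no room, or `r₀ ≤ 1`, so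
any two elements satisfy a relation `x ^ a * y ^ b ∈ Γ₁` with `(a, b) ≠ 0`, and then
`⁅x, y⁆ ^ a ∈ Γ₂` because commutators are bilinear modulo `Γ₂`. The same bilinearity pushes torsion
of `Γ_ℓ / Γ_{ℓ+1}` down the lower central series, so all `r_ℓ` with `ℓ ≥ 1` vanish (`d = r₀`) and
`⁅Γ, Γ⁆` is torsion. A finitely generated nilpotent group with torsion commutators is virtually
abelian: by induction on the class, in the preimage of an abelian subgroup of `Γ / Z(Γ)` each
`x ↦ ⁅s, x⁆` is a homomorphism into a finitely generated torsion abelian group, so the centralizers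
of the generators have finite index. A finite index subgroup `H ≅ ℤⁿ` then embeds into `Γ / Γ₁` with
image of finite index, which forces `n = r₀`.
-/

open Subgroup Function
open scoped commutatorElement IsMulCommutative

section FreeAbelianRank

variable {Q : Type*} [Group Q] {k n : ℕ}

theorem exists_injective_fin_one_iff_not_isMulTorsion :
    (∃ f : Multiplicative (Fin 1 → ℤ) →* Q, Injective f) ↔ ¬ IsMulTorsion Q := by
  let e : Multiplicative (Fin 1 → ℤ) ≃* Multiplicative ℤ :=
    AddEquiv.toMultiplicative (AddEquiv.funUnique (Fin 1) ℤ)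
  simp only [IsMulTorsion, not_forall, ← injective_zpow_iff_not_isOfFinOrder]
  constructor
  · rintro ⟨f, hf⟩
    have hpow (a : ℤ) : f (e.symm (.ofAdd 1)) ^ a = f (e.symm (.ofAdd a)) := by
      rw [← map_zpow, ← map_zpow, ← ofAdd_zsmul, smul_eq_mul, mul_one]
    refine ⟨f (e.symm (.ofAdd 1)), fun a b hab => ?_⟩
    simpa only [hpow, hf.eq_iff, e.symm.injective.eq_iff, EmbeddingLike.apply_eq_iff_eq] using hab
  · rintro ⟨g, hg⟩
    exact ⟨(zpowersHom Q g).comp e.toMonoidHom,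
      hg.comp (Multiplicative.toAdd.injective.comp e.injective)⟩

theorem exists_zpow_mul_zpow_eq_one_of_commute {x y : Q} (hxy : Commute x y)
    (h : ¬ ∃ f : Multiplicative (Fin 2 → ℤ) →* Q, Injective f) :
    ∃ a b : ℤ, (a, b) ≠ 0 ∧ x ^ a * y ^ b = 1 := by
  let F : Multiplicative (Fin 2 → ℤ) →* Q :=
    MonoidHom.mk' (fun v => x ^ v.toAdd 0 * y ^ v.toAdd 1) fun v w => by
      simp only [toAdd_mul, Pi.add_apply, zpow_add]
      exact ((hxy.zpow_zpow _ _).symm.mul_mul_mul_comm _ _).symm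
  obtain ⟨u, hFu, hu⟩ : ∃ u, F u = 1 ∧ u ≠ 1 := by
    by_contra! hF
    exact h ⟨F, (injective_iff_map_eq_one F).mpr hF⟩
  refine ⟨u.toAdd 0, u.toAdd 1, fun h0 => hu ?_, hFu⟩
  rw [Prod.mk_eq_zero] at h0
  exact Multiplicative.toAdd.injective (funext (Fin.forall_fin_two.mpr h0))

theorem le_of_injective_multiplicative_pi_int
    (f : Multiplicative (Fin k → ℤ) →* Multiplicative (Fin n → ℤ)) (hf : Injective f) : k ≤ n := by
  simpa using LinearMap.finrank_le_finrank_of_injective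
    (f := (AddMonoidHom.toMultiplicative.symm f).toIntLinearMap) hf

theorem exists_injective_multiplicative_pi_int_of_le (h : k ≤ n) :
    ∃ f : Multiplicative (Fin k → ℤ) →* Multiplicative (Fin n → ℤ), Injective f :=
  ⟨AddMonoidHom.toMultiplicative (Function.ExtendByZero.linearMap ℤ (Fin.castLE h)).toAddMonoidHom,
    Function.extend_injective (Fin.castLE_injective h) 0⟩

theorem le_of_injective_of_finiteIndex {M : Subgroup Q} [M.Normal] [M.FiniteIndex]
    (e : M ≃* Multiplicative (Fin n → ℤ)) (f : Multiplicative (Fin k → ℤ) →* Q)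
    (hf : Injective f) : k ≤ n := by
  let g := (f.comp (powMonoidHom M.index)).codRestrict M fun v =>
    (map_pow f v _).symm ▸ M.pow_index_mem (f v)
  refine le_of_injective_multiplicative_pi_int (e.toMonoidHom.comp g) (e.injective.comp ?_)
  intro v w hvw
  exact pow_left_injective FiniteIndex.index_ne_zero (hf (congrArg Subtype.val hvw))

end FreeAbelianRank

theorem CommGroup.exists_finiteIndex_mulEquiv_multiplicative_pi_int (A : Type*) [CommGroup A]
    [Group.FG A] :
    ∃ (n : ℕ) (B : Subgroup A), B.FiniteIndex ∧ Nonempty (B ≃* Multiplicative (Fin n → ℤ)) := by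
  obtain ⟨n, ι, _, p, hp, k, ⟨E⟩⟩ := AddCommGroup.equiv_free_prod_directSum_zmod (Additive A)
  have (i : ι) : NeZero (p i ^ k i) := ⟨pow_ne_zero _ (hp i).ne_zero⟩
  have : Finite (DirectSum ι fun i => ZMod (p i ^ k i)) :=
    Finite.of_equiv _ DFinsupp.equivFunOnFintype.symm
  let e := (AddEquiv.toMultiplicativeRight E).trans (MulEquiv.prodMultiplicative _ _)
  let j := e.symm.toMonoidHom.comp (MonoidHom.inl _ _)
  have hj : Injective j := e.symm.injective.comp fun _ _ h => congrArg Prod.fst h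
  have hker : ((MonoidHom.snd _ _).comp e.toMonoidHom).ker ≤ j.range := fun x hx =>
    ⟨(e x).1, e.symm_apply_eq.mpr (Prod.ext rfl hx.symm)⟩
  exact ⟨n, j.range, finiteIndex_of_le hker,
    ⟨(MonoidHom.ofInjective hj).symm.trans
      (AddEquiv.toMultiplicative Finsupp.addEquivFunOnFinite)⟩⟩

section

variable {G : Type*} [Group G]

section Commutator

variable {x y : G}

theorem commutatorElement_zpow_left_of_mem_center (hc : ⁅x, y⁆ ∈ center G) (n : ℤ) :
    ⁅x ^ n, y⁆ = ⁅x, y⁆ ^ n := by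
  have hconj : y⁻¹ * x * y = ⁅x, y⁆ * x := calc
    y⁻¹ * x * y = y⁻¹ * (⁅x, y⁆ * y) * x := by simp only [commutatorElement_def]; group
    _ = ⁅x, y⁆ * x := by rw [← mem_center_iff.mp hc y]; group
  have hpow : y⁻¹ * x ^ n * y = ⁅x, y⁆ ^ n * x ^ n := by
    have := conj_zpow (i := n) (a := y⁻¹) (b := x)
    rw [inv_inv] at this
    rw [← this, hconj, Commute.mul_zpow (mem_center_iff.mp hc x).symm]
  calc ⁅x ^ n, y⁆ = y * (y⁻¹ * x ^ n * y) * (x ^ n)⁻¹ * y⁻¹ := by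
        simp only [commutatorElement_def]; group
    _ = y * ⁅x, y⁆ ^ n * y⁻¹ := by rw [hpow]; group
    _ = ⁅x, y⁆ ^ n := by rw [mem_center_iff.mp (zpow_mem hc n) y]; group

theorem commutatorElement_zpow_eq_one_of_mem_center {a b : ℤ} (hc : ⁅x, y⁆ ∈ center G)
    (h : x ^ a * y ^ b ∈ center G) : ⁅x, y⁆ ^ a = 1 := by
  -- `x ^ a` is the central element `x ^ a * y ^ b` times a power of `y`
  rw [← commutatorElement_zpow_left_of_mem_center hc, ← mul_inv_cancel_right (x ^ a) (y ^ b),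
    commutatorElement_mul_left_eq_conj_mul, ← zpow_neg,
    ((Commute.refl y).zpow_left _).commutator_eq,
    Commute.commutator_eq (mem_center_iff.mp h y).symm]
  group

theorem isOfFinOrder_commutatorElement_of_mem_center {a b : ℤ} (hab : (a, b) ≠ 0)
    (hc : ⁅x, y⁆ ∈ center G) (h : x ^ a * y ^ b ∈ center G) : IsOfFinOrder ⁅x, y⁆ := by
  rw [isOfFinOrder_iff_zpow_eq_one]
  by_cases ha : a = 0
  · subst ha
    have hb : b ≠ 0 := by simpa using hab
    have hc' : ⁅y, x⁆ ∈ center G := by rw [← commutatorElement_inv]; exact inv_mem hc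
    have h' : y ^ b * x ^ (0 : ℤ) ∈ center G := by simpa using h
    refine ⟨b, hb, ?_⟩
    rw [← commutatorElement_inv, inv_zpow, commutatorElement_zpow_eq_one_of_mem_center hc' h',
      inv_one]
  · exact ⟨a, ha, commutatorElement_zpow_eq_one_of_mem_center hc h⟩

end Commutator

def IsTorsionModulo (H N : Subgroup G) [N.Normal] : Prop :=
  ∀ x ∈ H, IsOfFinOrder (x : G ⧸ N)

section IsTorsionModulo

variable {H M N : Subgroup G} [M.Normal] [N.Normal]

theorem QuotientGroup.isOfFinOrder_mk_iff {x : G} :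
    IsOfFinOrder (x : G ⧸ N) ↔ ∃ n, 0 < n ∧ x ^ n ∈ N := by
  simp only [isOfFinOrder_iff_pow_eq_one, ← QuotientGroup.mk_pow, QuotientGroup.eq_one_iff]

theorem isTorsionModulo_iff_pow_mem :
    IsTorsionModulo H N ↔ ∀ x ∈ H, ∃ n, 0 < n ∧ x ^ n ∈ N := by
  simp only [IsTorsionModulo, QuotientGroup.isOfFinOrder_mk_iff]

theorem IsTorsionModulo.trans (hHM : IsTorsionModulo H M) (hMN : IsTorsionModulo M N) :
    IsTorsionModulo H N := by
  intro x hx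
  obtain ⟨n, hn, hxn⟩ := QuotientGroup.isOfFinOrder_mk_iff.mp (hHM x hx)
  exact (QuotientGroup.mk_pow N x n ▸ hMN _ hxn).of_pow hn.ne'

theorem isTorsionModulo_iff_isMulTorsion :
    IsTorsionModulo H N ↔ IsMulTorsion (H ⧸ N.subgroupOf H) := by
  refine ⟨fun h q => ?_, fun h x hx => ?_⟩
  · induction q using QuotientGroup.induction_on with | H x =>
    obtain ⟨n, hn, hxn⟩ := QuotientGroup.isOfFinOrder_mk_iff.mp (h x x.2)
    exact isOfFinOrder_iff_pow_eq_one.mpr ⟨n, hn, by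
      rwa [← QuotientGroup.mk_pow, QuotientGroup.eq_one_iff, mem_subgroupOf]⟩
  · obtain ⟨n, hn, hxn⟩ := isOfFinOrder_iff_pow_eq_one.mp (h (⟨x, hx⟩ : H))
    rw [← QuotientGroup.mk_pow, QuotientGroup.eq_one_iff, mem_subgroupOf] at hxn
    exact QuotientGroup.isOfFinOrder_mk_iff.mpr ⟨n, hn, hxn⟩

end IsTorsionModulo

theorem QuotientGroup.mk_mem_center_of_commutator_le {H N : Subgroup G} [N.Normal]
    (h : ⁅H, ⊤⁆ ≤ N) {x : G} (hx : x ∈ H) : (x : G ⧸ N) ∈ center (G ⧸ N) := by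
  have : x ∈ N.upperCentralSeriesStep := (Subgroup.mem_upperCentralSeriesStep N x).mpr
    fun y => h (commutator_mem_commutator hx (mem_top y))
  rwa [Subgroup.upperCentralSeriesStep_eq_comap_center] at this

theorem isTorsionModulo_closure {N : Subgroup G} [N.Normal] {S : Set G}
    (hS : ∀ s ∈ S, IsOfFinOrder (s : G ⧸ N)) (hc : ⁅closure S, ⊤⁆ ≤ N) :
    IsTorsionModulo (closure S) N := by
  intro x hx
  induction hx using closure_induction with
  | mem s hs => exact hS s hs
  | one => exact IsOfFinOrder.one
  | mul x y hx _ ihx ihy =>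
    exact Commute.isOfFinOrder_mul
      (mem_center_iff.mp (QuotientGroup.mk_mem_center_of_commutator_le hc hx) _).symm ihx ihy
  | inv x _ ihx => exact ihx.inv

theorem QuotientGroup.mk_commutatorElement (N : Subgroup G) [N.Normal] (x y : G) :
    ((⁅x, y⁆ : G) : G ⧸ N) = ⁅(x : G ⧸ N), (y : G ⧸ N)⁆ :=
  map_commutatorElement (QuotientGroup.mk' N) x y

section LowerCentralSeries

local notation "γ" => Subgroup.lowerCentralSeries (⊤ : Subgroup G)

theorem mk_mem_center_of_mem_lowerCentralSeries {n : ℕ} {x : G} (hx : x ∈ γ n) :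
    (x : G ⧸ γ (n + 1)) ∈ center (G ⧸ γ (n + 1)) :=
  QuotientGroup.mk_mem_center_of_commutator_le le_rfl hx

theorem mk_commutatorElement_mem_center {n : ℕ} {x : G} (hx : x ∈ γ n) (y : G) :
    ⁅(x : G ⧸ γ (n + 2)), (y : G ⧸ γ (n + 2))⁆ ∈ center (G ⧸ γ (n + 2)) := by
  rw [← QuotientGroup.mk_commutatorElement]
  exact mk_mem_center_of_mem_lowerCentralSeries (n := n + 1)
    (commutator_mem_commutator hx (mem_top y))

theorem isTorsionModulo_lowerCentralSeries_succ {ℓ : ℕ} (h : IsTorsionModulo (γ ℓ) (γ (ℓ + 1))) :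
    IsTorsionModulo (γ (ℓ + 1)) (γ (ℓ + 2)) := by
  refine isTorsionModulo_closure ?_ le_rfl
  rintro _ ⟨p, hp, q, -, rfl⟩
  obtain ⟨n, hn, hpn⟩ := QuotientGroup.isOfFinOrder_mk_iff.mp (h p hp)
  have hpn' : (p : G ⧸ γ (ℓ + 2)) ^ (n : ℤ) * (q : G ⧸ γ (ℓ + 2)) ^ (0 : ℤ) ∈ center _ := by
    rw [zpow_zero, mul_one, zpow_natCast, ← QuotientGroup.mk_pow]
    exact mk_mem_center_of_mem_lowerCentralSeries hpn
  rw [QuotientGroup.mk_commutatorElement]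
  exact isOfFinOrder_commutatorElement_of_mem_center (by simp [hn.ne'])
    (mk_commutatorElement_mem_center hp q) hpn'

theorem isTorsionModulo_lowerCentralSeries_one_two
    (h : ∀ x y : G, ∃ a b : ℤ, (a, b) ≠ 0 ∧ x ^ a * y ^ b ∈ γ 1) :
    IsTorsionModulo (γ 1) (γ 2) := by
  refine isTorsionModulo_closure ?_ le_rfl
  rintro _ ⟨x, -, y, -, rfl⟩
  obtain ⟨a, b, hab, hxy⟩ := h x y
  rw [QuotientGroup.mk_commutatorElement]
  exact isOfFinOrder_commutatorElement_of_mem_center hab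
    (mk_commutatorElement_mem_center (n := 0) (mem_top x) y)
    (by simpa only [QuotientGroup.mk_mul, QuotientGroup.mk_zpow] using
      mk_mem_center_of_mem_lowerCentralSeries hxy)

theorem isTorsionModulo_lowerCentralSeries_of_one_two (h : IsTorsionModulo (γ 1) (γ 2)) :
    ∀ ℓ, IsTorsionModulo (γ (ℓ + 1)) (γ (ℓ + 2))
  | 0 => h
  | ℓ + 1 => isTorsionModulo_lowerCentralSeries_succ
      (isTorsionModulo_lowerCentralSeries_of_one_two h ℓ)

theorem isTorsionModulo_one_lowerCentralSeries (h : IsTorsionModulo (γ 1) (γ 2)) :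
    ∀ n, IsTorsionModulo (γ 1) (γ (n + 1))
  | 0 => fun x hx => QuotientGroup.isOfFinOrder_mk_iff.mpr ⟨1, one_pos, by simpa using hx⟩
  | n + 1 => (isTorsionModulo_one_lowerCentralSeries h n).trans
      (isTorsionModulo_lowerCentralSeries_of_one_two h n)

theorem isOfFinOrder_of_mem_commutator [Group.IsNilpotent G] (h : IsTorsionModulo (γ 1) (γ 2))
    {x : G} (hx : x ∈ commutator G) : IsOfFinOrder x := by
  obtain ⟨c, hc⟩ := Subgroup.nilpotent_iff_lowerCentralSeries.mp ‹_›
  obtain ⟨n, hn, hxn⟩ :=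
    isTorsionModulo_iff_pow_mem.mp (isTorsionModulo_one_lowerCentralSeries h c) x hx
  have : x ^ n ∈ γ c := Subgroup.lowerCentralSeries_antitone _ c.le_succ hxn
  exact isOfFinOrder_iff_pow_eq_one.mpr ⟨n, hn, by rwa [hc, mem_bot] at this⟩

end LowerCentralSeries

theorem Subgroup.FiniteIndex.map_subtype {H : Subgroup G} [H.FiniteIndex] (K : Subgroup H)
    [K.FiniteIndex] : (K.map H.subtype).FiniteIndex :=
  ⟨by rw [index_map_subtype]; exact mul_ne_zero FiniteIndex.index_ne_zero FiniteIndex.index_ne_zero⟩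

def commutatorElementHom (hcen : ∀ x y : G, ⁅x, y⁆ ∈ center G) (s : G) : G →* center G where
  toFun x := ⟨⁅s, x⁆, hcen s x⟩
  map_one' := Subtype.ext (commutatorElement_one_right s)
  map_mul' x y := Subtype.ext <| show ⁅s, x * y⁆ = ⁅s, x⁆ * ⁅s, y⁆ by
    rw [commutatorElement_mul_right_eq_mul_conj, mul_assoc _ x, mem_center_iff.mp (hcen s y) x,
      ← mul_assoc, mul_inv_cancel_right]

theorem ker_commutatorElementHom (hcen : ∀ x y : G, ⁅x, y⁆ ∈ center G) (s : G) :
    (commutatorElementHom hcen s).ker = centralizer {s} := by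
  ext x
  rw [MonoidHom.mem_ker, mem_centralizer_singleton_iff, ← Subtype.coe_inj]
  exact commutatorElement_eq_one_iff_mul_comm.trans eq_comm

theorem finiteIndex_center_of_isOfFinOrder_commutatorElement [Group.FG G]
    (hcen : ∀ x y : G, ⁅x, y⁆ ∈ center G) (htor : ∀ x y : G, IsOfFinOrder ⁅x, y⁆) :
    (center G).FiniteIndex := by
  have (s : G) : Finite (commutatorElementHom hcen s).range := by
    have : Group.FG (commutatorElementHom hcen s).range :=
      Group.fg_of_surjective (commutatorElementHom hcen s).rangeRestrict_surjective
    refine CommGroup.finite_of_fg_isMulTorsion _ ?_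
    rintro ⟨_, x, rfl⟩
    exact (subtype_injective _).isOfFinOrder_iff.mp <|
      (subtype_injective _).isOfFinOrder_iff.mp (htor s x)
  obtain ⟨S, hS⟩ := Group.FG.out (G := G)
  rw [center_eq_iInf hS]
  exact finiteIndex_iInf' _ fun s _ => ker_commutatorElementHom hcen s ▸ inferInstance

theorem exists_finiteIndex_isMulCommutative_of_isOfFinOrder_commutatorElement [Group.IsNilpotent G]
    [Group.FG G] (htor : ∀ x y : G, IsOfFinOrder ⁅x, y⁆) :
    ∃ A : Subgroup G, A.FiniteIndex ∧ IsMulCommutative A := by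
  revert htor
  refine Group.nilpotent_center_quotient_ind (P := fun G _ _ => ∀ [Group.FG G],
    (∀ x y : G, IsOfFinOrder ⁅x, y⁆) → ∃ A : Subgroup G, A.FiniteIndex ∧ IsMulCommutative A)
    G (fun G _ _ _ _ => ⟨⊤, inferInstance, ⟨⟨fun _ _ => Subsingleton.elim _ _⟩⟩⟩) ?_
  intro G _ _ ih _ htor
  let π := QuotientGroup.mk' (center G)
  obtain ⟨B, hB, hBcomm⟩ := ih fun x y => by
    induction x using QuotientGroup.induction_on with | H x =>
    induction y using QuotientGroup.induction_on with | H y =>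
    exact QuotientGroup.mk_commutatorElement (center G) x y ▸ π.isOfFinOrder (htor x y)
  let Δ := B.comap π
  have : Δ.FiniteIndex :=
    ⟨by rw [index_comap_of_surjective _ (QuotientGroup.mk'_surjective _)]; exact hB.index_ne_zero⟩
  have hcen (x y : Δ) : ⁅x, y⁆ ∈ center Δ := by
    have : π ⁅(x : G), (y : G)⁆ = 1 := by
      rw [map_commutatorElement, commutatorElement_eq_one_iff_mul_comm]
      exact congrArg Subtype.val (hBcomm.is_comm.comm ⟨_, x.2⟩ ⟨_, y.2⟩)
    exact mem_center_iff.mpr fun g => Subtype.ext <|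
      mem_center_iff.mp ((QuotientGroup.eq_one_iff _).mp this) g
  have := finiteIndex_center_of_isOfFinOrder_commutatorElement hcen fun x y =>
    Δ.subtype_injective.isOfFinOrder_iff.mp (htor x y)
  exact ⟨(center Δ).map Δ.subtype, FiniteIndex.map_subtype _, inferInstance⟩

theorem exists_finiteIndex_mulEquiv_multiplicative_pi_int_of_isOfFinOrder_commutatorElement
    [Group.IsNilpotent G] [Group.FG G] (htor : ∀ x y : G, IsOfFinOrder ⁅x, y⁆) :
    ∃ (n : ℕ) (H : Subgroup G), H.FiniteIndex ∧ Nonempty (H ≃* Multiplicative (Fin n → ℤ)) := by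
  obtain ⟨A, hA, hAcomm⟩ :=
    exists_finiteIndex_isMulCommutative_of_isOfFinOrder_commutatorElement htor
  obtain ⟨n, B, hB, ⟨e⟩⟩ := CommGroup.exists_finiteIndex_mulEquiv_multiplicative_pi_int A
  exact ⟨n, B.map A.subtype, FiniteIndex.map_subtype B,
    ⟨(B.equivMapOfInjective _ A.subtype_injective).symm.trans e⟩⟩

variable (G) in
abbrev lowerCentralQuotient (ℓ : ℕ) : Type _ :=
  (⊤ : Subgroup G).lowerCentralSeries ℓ ⧸
    ((⊤ : Subgroup G).lowerCentralSeries (ℓ + 1)).subgroupOf ((⊤ : Subgroup G).lowerCentralSeries ℓ)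

namespace lowerCentralQuotient

variable (G) in
def mk₀ : G →* lowerCentralQuotient G 0 :=
  (QuotientGroup.mk' _).comp (topEquiv (G := G)).symm.toMonoidHom

theorem mk₀_surjective : Surjective (mk₀ G) :=
  (QuotientGroup.mk'_surjective _).comp topEquiv.symm.surjective

theorem mk₀_eq_one_iff {x : G} : mk₀ G x = 1 ↔ x ∈ commutator G :=
  (QuotientGroup.eq_one_iff _).trans mem_subgroupOf

theorem commute_zero (a b : lowerCentralQuotient G 0) : Commute a b := by
  obtain ⟨x, rfl⟩ := mk₀_surjective a
  obtain ⟨y, rfl⟩ := mk₀_surjective b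
  rw [← commutatorElement_eq_one_iff_commute, ← map_commutatorElement, mk₀_eq_one_iff]
  exact commutator_mem_commutator (mem_top x) (mem_top y)

end lowerCentralQuotient

theorem isTorsionModulo_lowerCentralSeries_one_two_of_not_exists_injective
    (h : ¬ ∃ f : Multiplicative (Fin 2 → ℤ) →* lowerCentralQuotient G 0, Injective f) :
    IsTorsionModulo ((⊤ : Subgroup G).lowerCentralSeries 1)
      ((⊤ : Subgroup G).lowerCentralSeries 2) := by
  refine isTorsionModulo_lowerCentralSeries_one_two fun x y => ?_
  obtain ⟨a, b, hab, hxy⟩ := exists_zpow_mul_zpow_eq_one_of_commute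
    (lowerCentralQuotient.commute_zero (lowerCentralQuotient.mk₀ G x)
      (lowerCentralQuotient.mk₀ G y)) h
  refine ⟨a, b, hab, lowerCentralQuotient.mk₀_eq_one_iff.mp ?_⟩
  rwa [map_mul, map_zpow, map_zpow]

theorem exists_injective_lowerCentralQuotient_zero_iff {n : ℕ} {H : Subgroup G} [H.FiniteIndex]
    (e : H ≃* Multiplicative (Fin n → ℤ)) (htor : ∀ x ∈ commutator G, IsOfFinOrder x) (k : ℕ) :
    (∃ f : Multiplicative (Fin k → ℤ) →* lowerCentralQuotient G 0, Injective f) ↔ k ≤ n := by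
  let π := (lowerCentralQuotient.mk₀ G).comp H.subtype
  have hπ : Injective π := (injective_iff_map_eq_one π).mpr fun h hh => by
    have : IsOfFinOrder h :=
      H.subtype_injective.isOfFinOrder_iff.mp (htor _ (lowerCentralQuotient.mk₀_eq_one_iff.mp hh))
    exact (MulEquiv.map_eq_one_iff e).mp
      ((isOfFinOrder_iff_eq_one _).mp (e.toMonoidHom.isOfFinOrder this))
  constructor
  · rintro ⟨f, hf⟩
    have : π.range.Normal :=
      ⟨fun a ha g => by rwa [(lowerCentralQuotient.commute_zero g a).eq, mul_inv_cancel_right]⟩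
    have : π.range.FiniteIndex := ⟨by
      rw [MonoidHom.range_comp, H.range_subtype]
      exact ne_zero_of_dvd_ne_zero FiniteIndex.index_ne_zero
        (index_map_dvd _ lowerCentralQuotient.mk₀_surjective)⟩
    exact le_of_injective_of_finiteIndex ((MonoidHom.ofInjective hπ).symm.trans e) f hf
  · intro hkn
    obtain ⟨g, hg⟩ := exists_injective_multiplicative_pi_int_of_le hkn
    exact ⟨π.comp (e.symm.toMonoidHom.comp g), hπ.comp (e.symm.injective.comp hg)⟩

end

theorem sum_range_succ_mul_eq_add_two_mul_add {r : ℕ → ℕ} {k : ℕ} (hk : ∀ ℓ ≥ k, r ℓ = 0) :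
    ∑ ℓ ∈ Finset.range k, (ℓ + 1) * r ℓ =
      r 0 + 2 * r 1 + ∑ ℓ ∈ Finset.range k, (ℓ + 3) * r (ℓ + 2) := by
  rw [Finset.sum_subset (Finset.range_subset_range.mpr (Nat.le_add_right k 2))
      fun ℓ _ hℓ => by rw [hk ℓ (by simpa using hℓ), mul_zero],
    Finset.sum_range_succ', Finset.sum_range_succ']
  ring

theorem stmt7_general {Γ : Type*} [Group Γ] (hfg : Group.FG Γ) (hnil : Group.IsNilpotent Γ)
    (r : ℕ → ℕ)
    (hr : ∀ ℓ k : ℕ, k ≤ r ℓ ↔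
      ∃ f : Multiplicative (Fin k → ℤ) →*
        (((⊤ : Subgroup Γ).lowerCentralSeries ℓ) ⧸
          (((⊤ : Subgroup Γ).lowerCentralSeries (ℓ + 1)).subgroupOf ((⊤ : Subgroup Γ).lowerCentralSeries ℓ))),
        Function.Injective f)
    (d k : ℕ) (hk : ∀ ℓ ≥ k, r ℓ = 0)
    (hd : d = ∑ ℓ ∈ Finset.range k, (ℓ + 1) * r ℓ)
    (hd3 : d ≤ 3) :
    ∃ H : Subgroup Γ, H.FiniteIndex ∧ Nonempty (H ≃* Multiplicative (Fin d → ℤ)) := by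
  have hrank (ℓ : ℕ) : r ℓ = 0 ↔ IsTorsionModulo ((⊤ : Subgroup Γ).lowerCentralSeries ℓ)
      ((⊤ : Subgroup Γ).lowerCentralSeries (ℓ + 1)) := by
    rw [isTorsionModulo_iff_isMulTorsion, ← not_not (a := IsMulTorsion _),
      ← exists_injective_fin_one_iff_not_isMulTorsion, ← hr, not_le, Nat.lt_one_iff]
  rw [sum_range_succ_mul_eq_add_two_mul_add hk] at hd
  have h12 : IsTorsionModulo ((⊤ : Subgroup Γ).lowerCentralSeries 1)
      ((⊤ : Subgroup Γ).lowerCentralSeries 2) := by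
    by_cases h2 : 2 ≤ r 0
    · exact (hrank 1).mp (by omega)
    · exact isTorsionModulo_lowerCentralSeries_one_two_of_not_exists_injective (mt (hr 0 2).mpr h2)
  have hd0 : d = r 0 := by
    have h1 := (hrank 1).mpr h12
    have h2 (ℓ : ℕ) :=
      (hrank (ℓ + 2)).mpr (isTorsionModulo_lowerCentralSeries_of_one_two h12 (ℓ + 1))
    simp [h1, h2, hd]
  have htor := fun x (hx : x ∈ commutator Γ) => isOfFinOrder_of_mem_commutator h12 hx
  obtain ⟨n, H, hH, ⟨e⟩⟩ :=
    exists_finiteIndex_mulEquiv_multiplicative_pi_int_of_isOfFinOrder_commutatorElement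
      fun x y => htor _ (commutator_mem_commutator (mem_top x) (mem_top y))
  have hn : d = n := hd0.trans <| eq_of_forall_le_iff fun j =>
    (hr 0 j).trans (exists_injective_lowerCentralQuotient_zero_iff e htor j)
  exact ⟨H, hH, ⟨hn ▸ e⟩⟩

/-- Let `Γ` be a finitely generated nilpotent group, `r ℓ` the torsion-free rank
of `Γ_ℓ/Γ_{ℓ+1}` in the lower central series (characterized by embeddings of free
abelian groups), and `d = Σ_{ℓ} (ℓ+1)·r ℓ` the Bass–Guivarc'h polynomial growth
degree.  If `1 ≤ d ≤ 3`, then `Γ` contains a free abelian subgroup of finite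
index and rank `d`. -/
theorem stmt7 {Γ : Type*} [Group Γ] (hfg : Group.FG Γ) (hnil : Group.IsNilpotent Γ)
    (r : ℕ → ℕ)
    (hr : ∀ ℓ k : ℕ, k ≤ r ℓ ↔
      ∃ f : Multiplicative (Fin k → ℤ) →*
        (((⊤ : Subgroup Γ).lowerCentralSeries ℓ) ⧸
          (((⊤ : Subgroup Γ).lowerCentralSeries (ℓ + 1)).subgroupOf ((⊤ : Subgroup Γ).lowerCentralSeries ℓ))),
        Function.Injective f)
    (d k : ℕ) (hk : ∀ ℓ ≥ k, r ℓ = 0)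
    (hd : d = ∑ ℓ ∈ Finset.range k, (ℓ + 1) * r ℓ)
    (hd1 : 1 ≤ d) (hd3 : d ≤ 3) :
    ∃ H : Subgroup Γ, H.FiniteIndex ∧ Nonempty (H ≃* Multiplicative (Fin d → ℤ)) :=
  stmt7_general hfg hnil r hr d k hk hd hd3
end

section
/- Let 𝓗 be the discrete Heisenberg group, p, q distinct primes, and H_n = {(pⁿx, qⁿy, pⁿz)} for n ≥ 1. Let s ≥ 1 and n > s, and let h = (p^s x', q^s y', p^s z') ∈ H_s and γ = (pⁿx, qⁿy, pⁿz) ∈ H_n. Then the third entry of h*γ*h⁻¹ is p^s(p^{n−s}z + qⁿ x' y − q^s p^{n−s} x y'). Taking x' = q and y = q, this entry is not divisible by p^{s+1}, hence h*γ*h⁻¹ ∉ H_{s+1}. -/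
/-- The discrete Heisenberg group: `ℤ³` with
`(x,y,z)*(x',y',z') = (x+x', y+y', z+z'+x·y')`. -/
@[ext] structure Heis where
  x : ℤ
  y : ℤ
  z : ℤ

namespace Heis

instance : Mul Heis := ⟨fun a b => ⟨a.x + b.x, a.y + b.y, a.z + b.z + a.x * b.y⟩⟩
instance : One Heis := ⟨⟨0, 0, 0⟩⟩
instance : Inv Heis := ⟨fun a => ⟨-a.x, -a.y, -a.z + a.x * a.y⟩⟩

@[simp] lemma mul_def (a b : Heis) :
    a * b = ⟨a.x + b.x, a.y + b.y, a.z + b.z + a.x * b.y⟩ := rfl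
@[simp] lemma one_def : (1 : Heis) = ⟨0, 0, 0⟩ := rfl
@[simp] lemma inv_def (a : Heis) : a⁻¹ = ⟨-a.x, -a.y, -a.z + a.x * a.y⟩ := rfl

instance : Group Heis where
  mul_assoc a b c := by ext <;> simp <;> ring
  one_mul a := by ext <;> simp
  mul_one a := by ext <;> simp
  inv_mul_cancel a := by ext <;> simp

end Heis

/-- Let `p, q` be distinct primes, `H_n = {(pⁿx, qⁿy, pⁿz)} ⊆ 𝓗`, `1 ≤ s < n`.
For `h = (pˢx', qˢy', pˢz')` and `γ = (pⁿx, qⁿy, pⁿz)`, the third entry of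
`h*γ*h⁻¹` equals `pˢ(pⁿ⁻ˢz + qⁿx'y − qˢpⁿ⁻ˢxy')`; and taking `x' = q`, `y = q`
this is not divisible by `pˢ⁺¹`, so that `h*γ*h⁻¹ ∉ H_{s+1}`. -/
theorem stmt18 (p q : ℕ) (hp : p.Prime) (hq : q.Prime) (hpq : p ≠ q)
    (s n : ℕ) (hs : 1 ≤ s) (hn : s < n) (x y z x' y' z' : ℤ) :
    let h : Heis := ⟨(p : ℤ) ^ s * x', (q : ℤ) ^ s * y', (p : ℤ) ^ s * z'⟩
    let γ : Heis := ⟨(p : ℤ) ^ n * x, (q : ℤ) ^ n * y, (p : ℤ) ^ n * z⟩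
    (h * γ * h⁻¹).z =
      (p : ℤ) ^ s * ((p : ℤ) ^ (n - s) * z + (q : ℤ) ^ n * x' * y
        - (q : ℤ) ^ s * (p : ℤ) ^ (n - s) * x * y') ∧
    (x' = q → y = q →
      h * γ * h⁻¹ ∉ {g : Heis | ∃ a b c : ℤ,
        g = ⟨(p : ℤ) ^ (s + 1) * a, (q : ℤ) ^ (s + 1) * b, (p : ℤ) ^ (s + 1) * c⟩}) := by
  intro h γ
  have hne : n = s + (n - s) := by omega
  have hz : (h * γ * h⁻¹).z =
      (p : ℤ) ^ s * ((p : ℤ) ^ (n - s) * z + (q : ℤ) ^ n * x' * y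
        - (q : ℤ) ^ s * (p : ℤ) ^ (n - s) * x * y') := by
    show (p : ℤ) ^ s * z' + (p : ℤ) ^ n * z + (p : ℤ) ^ s * x' * ((q : ℤ) ^ n * y)
        + (-((p : ℤ) ^ s * z') + (p : ℤ) ^ s * x' * ((q : ℤ) ^ s * y'))
        + ((p : ℤ) ^ s * x' + (p : ℤ) ^ n * x) * -((q : ℤ) ^ s * y') = _
    rw [hne, pow_add, pow_add]
    simp only [Nat.add_sub_cancel_left]
    ring
  refine ⟨hz, ?_⟩
  rintro rfl rfl ⟨a, b, c, hc⟩
  have hzc : (h * γ * h⁻¹).z = (p : ℤ) ^ (s + 1) * c := by rw [hc]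
  rw [hz] at hzc
  have hps : (p : ℤ) ^ s ≠ 0 := pow_ne_zero _ (by exact_mod_cast hp.ne_zero)
  have hA : (p : ℤ) ^ (n - s) * z + (q : ℤ) ^ n * (q : ℤ) * (q : ℤ)
      - (q : ℤ) ^ s * (p : ℤ) ^ (n - s) * x * y' = (p : ℤ) * c := by
    apply mul_left_cancel₀ hps
    rw [hzc, pow_succ]; ring
  have hdvd : (p : ℤ) ∣ (q : ℤ) ^ (n + 2) := by
    have h1 : (p : ℤ) ∣ (p : ℤ) ^ (n - s) := dvd_pow_self _ (by omega)
    have : (q : ℤ) ^ (n + 2) = (p : ℤ) * c - (p : ℤ) ^ (n - s) * z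
        + (q : ℤ) ^ s * (p : ℤ) ^ (n - s) * x * y' := by
      rw [← hA]; ring
    rw [this]
    exact dvd_sub (Dvd.intro c rfl) (h1.mul_right z) |>.add
      ((h1.mul_left _ |>.mul_right x).mul_right y')
  have hpp : Prime (p : ℤ) := Nat.prime_iff_prime_int.mp hp
  have : (p : ℤ) ∣ (q : ℤ) := hpp.dvd_of_dvd_pow hdvd
  have : p ∣ q := by exact_mod_cast this
  exact hpq ((Nat.prime_dvd_prime_iff_eq hp hq).mp this)
end
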